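/- Let φ : ℝ → ℂ be infinitely differentiable with support contained in (−1,1). For every M > 0 there exists a constant C > 0 (depending only on φ and M) such that for all ε ∈ (0,1), all d > 1, and all r ∈ ℂ with Im r ≥ 0, setting g(s) = φ((s−d)/ε) + φ((−s−d)/ε), one has |ĝ(r)| ≤ C · ε · (1 + ε|Re r|)^{−M} · e^{(d+ε)·Im r}. -/

import Mathlib

open Complex Real MeasureTheory
open Set Function

noncomputable def FL (φ : ℝ → ℂ) (w : ℂ) : ℂ :=
  ∫ t : ℝ, Complex.exp (-Complex.I * w * t) * φ t

lemma integral_deriv_zero (f : ℝ → ℂ) (hf : ContDiff ℝ 1 f) (h2 : HasCompactSupport f) :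
    ∫ x : ℝ, deriv f x = 0 := by
  rw [← intervalIntegral.integral_Iic_add_Ioi (b := (0:ℝ))
    ((hf.continuous_deriv le_rfl).integrable_of_hasCompactSupport h2.deriv).integrableOn
    ((hf.continuous_deriv le_rfl).integrable_of_hasCompactSupport h2.deriv).integrableOn,
    h2.integral_Iic_deriv_eq hf 0, h2.integral_Ioi_deriv_eq hf 0]
  ring

lemma cont_E (w : ℂ) : Continuous fun s : ℝ => Complex.exp (-Complex.I * w * s) :=
  Complex.continuous_exp.comp (continuous_const.mul Complex.continuous_ofReal)

lemma hasDerivAt_E (w : ℂ) (s : ℝ) :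
    HasDerivAt (fun s : ℝ => Complex.exp (-Complex.I * w * s))
      (Complex.exp (-Complex.I * w * s) * (-Complex.I * w)) s := by
  have h1 : HasDerivAt (fun s : ℝ => (-Complex.I * w) * (s:ℂ)) (-Complex.I * w) s := by
    simpa using (Complex.ofRealCLM.hasDerivAt (x := s)).const_mul (-Complex.I * w)
  simpa [mul_comm] using h1.cexp

lemma parts (f : ℝ → ℂ) (hf : ContDiff ℝ (⊤ : ℕ∞) f) (h2 : HasCompactSupport f) (w : ℂ) :
    ∫ s : ℝ, Complex.exp (-Complex.I * w * s) * deriv f s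
      = (Complex.I * w) * ∫ s : ℝ, Complex.exp (-Complex.I * w * s) * f s := by
  set E : ℝ → ℂ := fun s : ℝ => Complex.exp (-Complex.I * w * s) with hE
  have hder : ∀ s : ℝ, HasDerivAt (fun s => E s * f s)
      (E s * (-Complex.I * w) * f s + E s * deriv f s) s := fun s =>
    (hasDerivAt_E w s).mul ((hf.differentiable (by simp) s).hasDerivAt)
  have hcs : HasCompactSupport fun s => E s * f s := h2.mul_left
  have hcd : ContDiff ℝ 1 fun s => E s * f s := by
    apply ContDiff.mul _ (hf.of_le (by simp))
    exact (Complex.contDiff_exp.comp ((contDiff_const.mul Complex.ofRealCLM.contDiff))).of_le le_top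
  have h0 : ∫ s : ℝ, (E s * (-Complex.I * w) * f s + E s * deriv f s) = 0 := by
    have := integral_deriv_zero _ hcd hcs
    rw [← this]
    congr 1
    ext s
    exact ((hder s).deriv).symm
  have hint1 : Integrable fun s : ℝ => E s * (-Complex.I * w) * f s := by
    apply Continuous.integrable_of_hasCompactSupport
    · exact ((cont_E w).mul continuous_const).mul hf.continuous
    · exact (h2.mul_left (f := fun s => E s * (-Complex.I * w)))
  have hint2 : Integrable fun s : ℝ => E s * deriv f s := by
    apply Continuous.integrable_of_hasCompactSupport
    · exact (cont_E w).mul (hf.continuous_deriv (by simp))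
    · exact h2.deriv.mul_left
  rw [integral_add hint1 hint2] at h0
  have : ∫ s : ℝ, E s * (-Complex.I * w) * f s = (-Complex.I * w) * ∫ s : ℝ, E s * f s := by
    rw [← integral_const_mul]
    congr 1; ext s; ring
  rw [this] at h0
  linear_combination h0


lemma contDiff_iteratedDeriv (f : ℝ → ℂ) (hf : ContDiff ℝ (⊤ : ℕ∞) f) (n : ℕ) :
    ContDiff ℝ (⊤ : ℕ∞) (iteratedDeriv n f) := by
  induction n with
  | zero => simpa using hf
  | succ n ih =>
    rw [iteratedDeriv_succ]
    exact (contDiff_infty_iff_deriv.mp ih).2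

lemma hcs_iteratedDeriv (f : ℝ → ℂ) (h2 : HasCompactSupport f) (n : ℕ) :
    HasCompactSupport (iteratedDeriv n f) := by
  induction n with
  | zero => simpa using h2
  | succ n ih => rw [iteratedDeriv_succ]; exact ih.deriv

lemma supp_iteratedDeriv (f : ℝ → ℂ) (hsupp : support f ⊆ Icc (-1:ℝ) 1) (n : ℕ) :
    support (iteratedDeriv n f) ⊆ Icc (-1:ℝ) 1 := by
  induction n with
  | zero => simpa using hsupp
  | succ n ih =>
    rw [iteratedDeriv_succ]
    exact (support_deriv_subset).trans (closure_minimal ih isClosed_Icc)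

lemma iter (f : ℝ → ℂ) (hf : ContDiff ℝ (⊤ : ℕ∞) f) (h2 : HasCompactSupport f) (w : ℂ) (n : ℕ) :
    ∫ s : ℝ, Complex.exp (-Complex.I * w * s) * iteratedDeriv n f s
      = (Complex.I * w) ^ n * FL f w := by
  induction n with
  | zero => simp [FL]
  | succ n ih =>
    rw [iteratedDeriv_succ,
      parts _ (contDiff_iteratedDeriv f hf n) (hcs_iteratedDeriv f h2 n) w, ih]
    ring

lemma abs_E (w : ℂ) (t : ℝ) :
    ‖Complex.exp (-Complex.I * w * t)‖ = Real.exp (w.im * t) := by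
  rw [Complex.norm_exp]
  congr 1
  simp [Complex.mul_re]

lemma basic_bound (g : ℝ → ℂ) (hg : Continuous g) (h2 : HasCompactSupport g)
    (hsupp : support g ⊆ Icc (-1:ℝ) 1) (w : ℂ) :
    ‖∫ s : ℝ, Complex.exp (-Complex.I * w * s) * g s‖
      ≤ (∫ s : ℝ, ‖g s‖) * Real.exp |w.im| := by
  have hint : Integrable fun s : ℝ => Complex.exp (-Complex.I * w * s) * g s :=
    ((cont_E w).mul hg).integrable_of_hasCompactSupport h2.mul_left
  calc ‖∫ s : ℝ, Complex.exp (-Complex.I * w * s) * g s‖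
      ≤ ∫ s : ℝ, ‖Complex.exp (-Complex.I * w * s) * g s‖ := by
        simpa using norm_integral_le_integral_norm
          (fun s : ℝ => Complex.exp (-Complex.I * w * s) * g s)
    _ ≤ ∫ s : ℝ, Real.exp |w.im| * ‖g s‖ := by
        apply integral_mono hint.norm ((hg.norm.integrable_of_hasCompactSupport h2.norm).const_mul _)
        intro s
        by_cases hs : g s = 0
        · simp [hs]
        · have hmem := hsupp (by simp [hs, support] : s ∈ support g)
          simp only [norm_mul, abs_E]
          apply mul_le_mul_of_nonneg_right _ (norm_nonneg _)
          apply Real.exp_le_exp.mpr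
          calc w.im * s ≤ |w.im * s| := le_abs_self _
            _ = |w.im| * |s| := abs_mul _ _
            _ ≤ |w.im| * 1 := by
                gcongr
                rw [abs_le]; exact ⟨hmem.1, hmem.2⟩
            _ = |w.im| := mul_one _
    _ = (∫ s : ℝ, ‖g s‖) * Real.exp |w.im| := by
        rw [integral_const_mul]; ring

lemma decay (φ : ℝ → ℂ) (hφ : ContDiff ℝ (⊤ : ℕ∞) φ) (h2 : HasCompactSupport φ)
    (hsupp : support φ ⊆ Icc (-1:ℝ) 1) (n : ℕ) :
    ∃ C : ℝ, 0 < C ∧ ∀ w : ℂ,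
      ‖FL φ w‖ * (1 + |w.re|) ^ n ≤ C * Real.exp |w.im| := by
  set K : ℕ → ℝ := fun k => ∫ s : ℝ, ‖iteratedDeriv k φ s‖ with hK
  have hKnn : ∀ k, 0 ≤ K k := fun k => integral_nonneg fun s => norm_nonneg _
  refine ⟨(∑ k ∈ Finset.range (n+1), (n.choose k : ℝ) * K k) + 1, ?_, ?_⟩
  · have : 0 ≤ ∑ k ∈ Finset.range (n+1), (n.choose k : ℝ) * K k :=
      Finset.sum_nonneg fun k _ => mul_nonneg (by positivity) (hKnn k)
    linarith
  intro w
  have key : ∀ k : ℕ, |w.re| ^ k * ‖FL φ w‖ ≤ K k * Real.exp |w.im| := by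
    intro k
    calc |w.re| ^ k * ‖FL φ w‖
        ≤ ‖w‖ ^ k * ‖FL φ w‖ := by
          gcongr
          exact Complex.abs_re_le_norm w
      _ = ‖(Complex.I * w) ^ k * FL φ w‖ := by
          rw [norm_mul, norm_pow, norm_mul, Complex.norm_I, one_mul]
      _ = ‖∫ s : ℝ, Complex.exp (-Complex.I * w * s) * iteratedDeriv k φ s‖ := by
          rw [iter φ hφ h2 w k]
      _ ≤ K k * Real.exp |w.im| :=
          basic_bound _ ((contDiff_iteratedDeriv φ hφ k).continuous) (hcs_iteratedDeriv φ h2 k)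
            (supp_iteratedDeriv φ hsupp k) w
  calc ‖FL φ w‖ * (1 + |w.re|) ^ n
      = ∑ k ∈ Finset.range (n+1),
          (n.choose k : ℝ) * (|w.re| ^ k * ‖FL φ w‖) := by
        rw [show (1 + |w.re|) = (|w.re| + 1) by ring, add_pow, Finset.mul_sum]
        congr 1; ext k; ring
    _ ≤ ∑ k ∈ Finset.range (n+1), (n.choose k : ℝ) * (K k * Real.exp |w.im|) := by
        apply Finset.sum_le_sum
        intro k _
        exact mul_le_mul_of_nonneg_left (key k) (by positivity)
    _ = (∑ k ∈ Finset.range (n+1), (n.choose k : ℝ) * K k) * Real.exp |w.im| := by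
        rw [Finset.sum_mul]; congr 1; ext k; ring
    _ ≤ ((∑ k ∈ Finset.range (n+1), (n.choose k : ℝ) * K k) + 1) * Real.exp |w.im| := by
        apply mul_le_mul_of_nonneg_right (by linarith) (Real.exp_pos _).le

lemma L1 (φ : ℝ → ℂ) (r : ℂ) (ε d : ℝ) (hε : 0 < ε) :
    ∫ s : ℝ, Complex.exp (-Complex.I * r * s) * φ ((s - d) / ε)
      = (ε : ℂ) * Complex.exp (-Complex.I * r * d) * FL φ (ε * r) := by
  have hne : (ε : ℂ) ≠ 0 := Complex.ofReal_ne_zero.mpr hε.ne'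
  calc ∫ s : ℝ, Complex.exp (-Complex.I * r * s) * φ ((s - d) / ε)
      = ∫ u : ℝ, Complex.exp (-Complex.I * r * (u + d)) * φ (u / ε) := by
        rw [← integral_add_right_eq_self
          (fun s : ℝ => Complex.exp (-Complex.I * r * s) * φ ((s - d) / ε)) d]
        simp only [add_sub_cancel_right]
        norm_cast
    _ = ∫ u : ℝ, Complex.exp (-Complex.I * r * d) *
          ((fun t : ℝ => Complex.exp (-Complex.I * (ε * r) * t) * φ t) (u / ε)) := by
        congr 1; ext u
        simp only
        rw [← mul_assoc, ← Complex.exp_add]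
        congr 2
        push_cast
        field_simp
        ring
    _ = Complex.exp (-Complex.I * r * d) *
          ∫ u : ℝ, (fun t : ℝ => Complex.exp (-Complex.I * (ε * r) * t) * φ t) (u / ε) :=
        integral_const_mul _ _
    _ = (ε : ℂ) * Complex.exp (-Complex.I * r * d) * FL φ (ε * r) := by
        rw [MeasureTheory.Measure.integral_comp_div
          (fun t : ℝ => Complex.exp (-Complex.I * (ε * r) * t) * φ t) ε,
          abs_of_pos hε, FL]
        simp [Complex.real_smul]
        ring

/-- Paley–Wiener–Schwartz type bound for the Fourier–Laplace transform of the
rescaled-translated test function `g(s) = φ((s−d)/ε) + φ((−s−d)/ε)`. -/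
theorem pws_scaled_bound
    (φ : ℝ → ℂ) (hφ : ContDiff ℝ (⊤ : ℕ∞) φ)
    (hsupp : Function.support φ ⊆ Set.Ioo (-1 : ℝ) 1) :
    ∀ M : ℝ, 0 < M → ∃ C : ℝ, 0 < C ∧
      ∀ ε : ℝ, ε ∈ Set.Ioo (0 : ℝ) 1 → ∀ d : ℝ, 1 < d → ∀ r : ℂ, 0 ≤ r.im →
        ‖∫ s : ℝ, Complex.exp (-Complex.I * r * s) *
            (φ ((s - d) / ε) + φ ((-s - d) / ε))‖ ≤
          C * ε * (1 + ε * |r.re|) ^ (-M) * Real.exp ((d + ε) * r.im) := by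
  intro M hM
  have hφ' : ContDiff ℝ (⊤ : ℕ∞) φ := hφ.of_le (by simp)
  have hsupp' : support φ ⊆ Icc (-1:ℝ) 1 := hsupp.trans Ioo_subset_Icc_self
  have hzero : ∀ y : ℝ, y ∉ Set.Ioo (-1:ℝ) 1 → φ y = 0 := by
    intro y hy
    by_contra h
    exact hy (hsupp (mem_support.mpr h))
  have h2 : HasCompactSupport φ := HasCompactSupport.intro isCompact_Icc
    (fun y hy => hzero y (fun hmem => hy (Ioo_subset_Icc_self hmem)))
  set n := ⌈M⌉₊ with hn
  obtain ⟨C₀, hC₀, hbound⟩ := decay φ hφ' h2 hsupp' n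
  refine ⟨2 * C₀, by linarith, ?_⟩
  rintro ε ⟨hε0, hε1⟩ d hd r hb
  set b := r.im
  set X := 1 + ε * |r.re| with hX
  have hX1 : (1:ℝ) ≤ X := le_add_of_nonneg_right (mul_nonneg hε0.le (abs_nonneg _))
  have hXpos : (0:ℝ) < X := lt_of_lt_of_le one_pos hX1
  -- integrability of the two pieces
  have key_supp : ∀ c : ℝ, ∀ x : ℝ, x ∉ Icc (c - ε) (c + ε) → φ ((x - c)/ε) = 0 := by
    intro c x hx
    apply hzero
    intro hmem
    apply hx
    rw [Set.mem_Ioo] at hmem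
    have h1 := (lt_div_iff₀ hε0).mp hmem.1
    have h2 := (div_lt_iff₀ hε0).mp hmem.2
    constructor <;> linarith
  have hint1 : Integrable fun s : ℝ =>
      Complex.exp (-Complex.I * r * s) * φ ((s - d)/ε) := by
    apply Continuous.integrable_of_hasCompactSupport
    · exact (cont_E r).mul (hφ.continuous.comp (by fun_prop))
    · exact HasCompactSupport.mul_left (HasCompactSupport.intro (isCompact_Icc
        (a := d - ε) (b := d + ε)) (fun x hx => key_supp d x hx))
  have hint2 : Integrable fun s : ℝ =>
      Complex.exp (-Complex.I * r * s) * φ ((-s - d)/ε) := by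
    apply Continuous.integrable_of_hasCompactSupport
    · exact (cont_E r).mul (hφ.continuous.comp (by fun_prop))
    · refine HasCompactSupport.mul_left (HasCompactSupport.intro (isCompact_Icc
        (a := -(d + ε)) (b := -(d - ε))) (fun x hx => ?_))
      have : -x ∉ Icc (d - ε) (d + ε) := by
        simp only [Set.mem_Icc, not_and_or, not_le] at hx ⊢
        rcases hx with h | h
        · right; linarith
        · left; linarith
      have := key_supp d (-x) this
      simpa [show -x - d = x * (-1) - d by ring] using this
  have hsplit : (∫ s : ℝ, Complex.exp (-Complex.I * r * s) *
      (φ ((s - d) / ε) + φ ((-s - d) / ε)))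
      = (∫ s : ℝ, Complex.exp (-Complex.I * r * s) * φ ((s - d)/ε))
        + ∫ s : ℝ, Complex.exp (-Complex.I * r * s) * φ ((-s - d)/ε) := by
    rw [← integral_add hint1 hint2]
    congr 1; ext s; ring
  have hI1 : (∫ s : ℝ, Complex.exp (-Complex.I * r * s) * φ ((s - d)/ε))
      = (ε : ℂ) * Complex.exp (-Complex.I * r * d) * FL φ (ε * r) := L1 φ r ε d hε0
  have hI2 : (∫ s : ℝ, Complex.exp (-Complex.I * r * s) * φ ((-s - d)/ε))
      = (ε : ℂ) * Complex.exp (-Complex.I * (-r) * d) * FL φ (ε * (-r)) := by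
    calc (∫ s : ℝ, Complex.exp (-Complex.I * r * s) * φ ((-s - d)/ε))
        = ∫ s : ℝ, (fun t : ℝ => Complex.exp (-Complex.I * (-r) * t) * φ ((t - d)/ε)) (-s) := by
          congr 1; ext s
          show Complex.exp (-Complex.I * r * s) * φ ((-s - d)/ε)
              = Complex.exp (-Complex.I * (-r) * ((-s : ℝ) : ℂ)) * φ ((-s - d)/ε)
          congr 2
          push_cast; ring
      _ = ∫ t : ℝ, Complex.exp (-Complex.I * (-r) * t) * φ ((t - d)/ε) :=
          MeasureTheory.integral_neg_eq_self
            (fun t : ℝ => Complex.exp (-Complex.I * (-r) * t) * φ ((t - d)/ε)) volume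
      _ = _ := L1 φ (-r) ε d hε0
  have habs1 : ‖(ε : ℂ) * Complex.exp (-Complex.I * r * d) * FL φ (ε * r)‖
      = ε * (Real.exp (b * d) * ‖FL φ (ε * r)‖) := by
    rw [norm_mul, norm_mul, Complex.norm_real, Real.norm_eq_abs, abs_of_pos hε0, abs_E]
    ring
  have habs2 : ‖(ε : ℂ) * Complex.exp (-Complex.I * (-r) * d) * FL φ (ε * (-r))‖
      = ε * (Real.exp (-(b * d)) * ‖FL φ (ε * (-r))‖) := by
    rw [norm_mul, norm_mul, Complex.norm_real, Real.norm_eq_abs, abs_of_pos hε0, abs_E]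
    rw [Complex.neg_im]
    ring_nf
    simp only [b]; ring
  have hF1 : ‖FL φ ((ε : ℂ) * r)‖ ≤ C₀ * Real.exp (ε * b) / X ^ n := by
    have h := hbound ((ε : ℂ) * r)
    rw [Complex.re_ofReal_mul, Complex.im_ofReal_mul, abs_mul, abs_mul, abs_of_pos hε0,
      _root_.abs_of_nonneg (show (0:ℝ) ≤ r.im from hb)] at h
    rw [le_div_iff₀ (pow_pos hXpos n)]
    exact h
  have hF2 : ‖FL φ ((ε : ℂ) * (-r))‖ ≤ C₀ * Real.exp (ε * b) / X ^ n := by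
    have h := hbound ((ε : ℂ) * (-r))
    rw [Complex.re_ofReal_mul, Complex.im_ofReal_mul, Complex.neg_re, Complex.neg_im,
      abs_mul, abs_mul, abs_of_pos hε0, abs_neg, abs_neg,
      _root_.abs_of_nonneg (show (0:ℝ) ≤ r.im from hb)] at h
    rw [le_div_iff₀ (pow_pos hXpos n)]
    exact h
  have hXle : (X ^ n)⁻¹ ≤ X ^ (-M) := by
    rw [← Real.rpow_natCast X n, ← Real.rpow_neg hXpos.le]
    apply Real.rpow_le_rpow_of_exponent_le hX1
    have := Nat.le_ceil M
    rw [hn]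
    push_cast at this ⊢
    linarith
  calc ‖∫ s : ℝ, Complex.exp (-Complex.I * r * s) *
          (φ ((s - d) / ε) + φ ((-s - d) / ε))‖
      ≤ ‖(ε : ℂ) * Complex.exp (-Complex.I * r * d) * FL φ (ε * r)‖
        + ‖(ε : ℂ) * Complex.exp (-Complex.I * (-r) * d) * FL φ (ε * (-r))‖ := by
        rw [hsplit, hI1, hI2]
        exact norm_add_le _ _
    _ = ε * (Real.exp (b * d) * ‖FL φ (ε * r)‖)
        + ε * (Real.exp (-(b * d)) * ‖FL φ (ε * (-r))‖) := by
        rw [habs1, habs2]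
    _ ≤ ε * (Real.exp (b * d) * (C₀ * Real.exp (ε * b) / X ^ n))
        + ε * (Real.exp (b * d) * (C₀ * Real.exp (ε * b) / X ^ n)) := by
        have hbd : -(b * d) ≤ b * d := by nlinarith
        have hs1 : Real.exp (b * d) * ‖FL φ ((ε:ℂ) * r)‖
            ≤ Real.exp (b * d) * (C₀ * Real.exp (ε * b) / X ^ n) :=
          mul_le_mul_of_nonneg_left hF1 (Real.exp_pos _).le
        have hs2 : Real.exp (-(b * d)) * ‖FL φ ((ε:ℂ) * (-r))‖
            ≤ Real.exp (b * d) * (C₀ * Real.exp (ε * b) / X ^ n) :=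
          mul_le_mul (Real.exp_le_exp.mpr hbd) hF2 (norm_nonneg _) (Real.exp_pos _).le
        exact add_le_add (mul_le_mul_of_nonneg_left hs1 hε0.le)
          (mul_le_mul_of_nonneg_left hs2 hε0.le)
    _ = (2 * C₀) * ε * (Real.exp (b * d) * Real.exp (ε * b)) * (X ^ n)⁻¹ := by
        ring
    _ = (2 * C₀) * ε * Real.exp ((d + ε) * b) * (X ^ n)⁻¹ := by
        rw [← Real.exp_add]
        ring_nf
    _ ≤ (2 * C₀) * ε * Real.exp ((d + ε) * b) * X ^ (-M) := by
        apply mul_le_mul_of_nonneg_left hXle (by positivity)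
    _ = (2 * C₀) * ε * X ^ (-M) * Real.exp ((d + ε) * b) := by ring
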